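/- arXiv:1609.09288 — 3 statements merged into one kernel-verified Lean document; each statement's English description precedes it below -/
import Mathlib

section
/- The set of subsets of a finite set Φ of lemmas whose conjunctions are inductive with respect to τ, ordered by inclusion, has a greatest element (namely the union of all inductive subsets), and its conjunction is the strongest inductive weakening: it implies the conjunction of every inductive subset of Φ. -/
theorem stmt_7 {S : Type*} (τ : S → S → Prop) (Φ : Set (S → Prop))
    (hΦ : Φ.Finite) :
    ∃ Tmax ⊆ Φ,
      (∀ s s', (∀ l ∈ Tmax, l s) → τ s s' → ∀ l ∈ Tmax, l s') ∧
      (∀ T ⊆ Φ, (∀ s s', (∀ l ∈ T, l s) → τ s s' → ∀ l ∈ T, l s') →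
        T ⊆ Tmax) ∧
      (∀ T ⊆ Φ, (∀ s s', (∀ l ∈ T, l s) → τ s s' → ∀ l ∈ T, l s') →
        ∀ s, (∀ l ∈ Tmax, l s) → ∀ l ∈ T, l s) := by
  refine ⟨{l | ∃ T ⊆ Φ, (∀ s s', (∀ l ∈ T, l s) → τ s s' → ∀ l ∈ T, l s') ∧ l ∈ T},
    ?_, ?_, ?_, ?_⟩
  · rintro l ⟨T, hT, _, hl⟩; exact hT hl
  · rintro s s' hs hτ l ⟨T, hTΦ, hind, hl⟩
    exact hind s s' (fun m hm => hs m ⟨T, hTΦ, hind, hm⟩) hτ l hl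
  · intro T hTΦ hind l hl; exact ⟨T, hTΦ, hind, hl⟩
  · intro T hTΦ hind s hs l hl; exact hs l ⟨T, hTΦ, hind, hl⟩
end

section
/- Houdini soundness and optimality: define a sequence of subsets of a finite lemma set Φ by T₀ = Φ and T_{k+1} = T_k minus those lemmas l ∈ T_k for which there exists a τ-transition from a state satisfying the conjunction of T_k to a state falsifying l. Then the sequence is decreasing, stabilizes after at most |Φ| steps, its limit T* is inductive with respect to τ, and T* contains every subset of Φ that is inductive with respect to τ. -/
theorem stmt_8 {S : Type*} (τ : S → S → Prop) (Φ : Set (S → Prop))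
    (hΦ : Φ.Finite) (H : ℕ → Set (S → Prop))
    (hH0 : H 0 = Φ)
    (hHs : ∀ k, H (k + 1) =
      {l ∈ H k | ¬ ∃ s s', (∀ m ∈ H k, m s) ∧ τ s s' ∧ ¬ l s'}) :
    (∀ k, H (k + 1) ⊆ H k) ∧
    ∃ N ≤ hΦ.toFinset.card,
      (∀ k, H (N + k) = H N) ∧
      (∀ s s', (∀ l ∈ H N, l s) → τ s s' → ∀ l ∈ H N, l s') ∧
      (∀ T ⊆ Φ, (∀ s s', (∀ l ∈ T, l s) → τ s s' → ∀ l ∈ T, l s') →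
        T ⊆ H N) := by
  have hmono : ∀ k, H (k + 1) ⊆ H k := by
    intro k l hl
    rw [hHs k] at hl
    exact hl.1
  have hsubΦ : ∀ k, H k ⊆ Φ := by
    intro k
    induction k with
    | zero => rw [hH0]
    | succ n ih => exact (hmono n).trans ih
  have hfin : ∀ k, (H k).Finite := fun k => hΦ.subset (hsubΦ k)
  -- if equal at N, stays equal
  have hstab : ∀ N, H (N + 1) = H N → ∀ k, H (N + k) = H N := by
    intro N hN k
    induction k with
    | zero => rfl
    | succ j ih =>
      have : N + (j + 1) = (N + j) + 1 := by ring
      rw [this, hHs (N + j), ih, ← hHs N, hN]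
  -- strict decrease while not stabilized
  have hdec : ∀ N, (∀ j < N, H (j + 1) ≠ H j) → (H N).ncard + N ≤ hΦ.toFinset.card := by
    intro N
    induction N with
    | zero =>
      intro _
      rw [hH0, Set.ncard_eq_toFinset_card _ hΦ]; omega
    | succ n ih =>
      intro h
      have hne : H (n + 1) ≠ H n := h n (Nat.lt_succ_self n)
      have hss : H (n + 1) ⊂ H n := ⟨hmono n, fun hsub => hne (Set.Subset.antisymm (hmono n) hsub)⟩
      have hlt : (H (n + 1)).ncard < (H n).ncard := Set.ncard_lt_ncard hss (hfin n)
      have := ih (fun j hj => h j (hj.trans (Nat.lt_succ_self n)))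
      omega
  -- find N
  have hexN : ∃ N ≤ hΦ.toFinset.card, H (N + 1) = H N := by
    by_contra hc
    push_neg at hc
    have h' : ∀ j < hΦ.toFinset.card + 1, H (j + 1) ≠ H j := by
      intro j hj
      exact hc j (Nat.lt_succ_iff.mp hj)
    have := hdec (hΦ.toFinset.card + 1) h'
    omega
  obtain ⟨N, hNle, hNeq⟩ := hexN
  refine ⟨hmono, N, hNle, hstab N hNeq, ?_, ?_⟩
  · -- inductive
    intro s s' hs hτ l hl
    by_contra hl'
    have : l ∈ H (N + 1) := hNeq ▸ hl
    rw [hHs N] at this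
    exact this.2 ⟨s, s', hs, hτ, hl'⟩
  · -- optimality
    intro T hTΦ hTind
    have : ∀ k, T ⊆ H k := by
      intro k
      induction k with
      | zero => rw [hH0]; exact hTΦ
      | succ n ih =>
        intro l hl
        rw [hHs n]
        refine ⟨ih hl, ?_⟩
        rintro ⟨s, s', hs, hτ, hls'⟩
        exact hls' (hTind s s' (fun m hm => hs m (ih hm)) hτ l hl)
    exact this N
end

section
/- If the fixpoint T* of the Houdini iteration is used, the conjunction of T* is the strongest inductive weakening of the conjunction of Φ: for any T ⊆ Φ with conjunction inductive w.r.t. τ, every state satisfying the conjunction of T* satisfies the conjunction of T. -/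
theorem stmt_9 {S : Type*} (τ : S → S → Prop) (Φ : Set (S → Prop))
    (hΦ : Φ.Finite) (H : ℕ → Set (S → Prop))
    (hH0 : H 0 = Φ)
    (hHs : ∀ k, H (k + 1) =
      {l ∈ H k | ¬ ∃ s s', (∀ m ∈ H k, m s) ∧ τ s s' ∧ ¬ l s'})
    (N : ℕ) (hfix : H (N + 1) = H N) :
    ∀ T ⊆ Φ, (∀ s s', (∀ l ∈ T, l s) → τ s s' → ∀ l ∈ T, l s') →
      ∀ s, (∀ l ∈ H N, l s) → ∀ l ∈ T, l s := by
  intro T hTΦ hind s hs l hl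
  have key : ∀ k, T ⊆ H k := by
    intro k
    induction k with
    | zero => rw [hH0]; exact hTΦ
    | succ k ih =>
      intro m hm
      rw [hHs k]
      refine ⟨ih hm, ?_⟩
      rintro ⟨s, s', hall, hτ, hns'⟩
      exact hns' (hind s s' (fun l hl => hall l (ih hl)) hτ m hm)
  exact hs l (key N hl)
end
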